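/- Let ∅ = F_0 ⊂ F_1 ⊂ ⋯ ⊂ F_k ⊂ F_{k+1} = E be a chain of flats of M and let x ∈ ℝ^L with x ≥ 0. Suppose that for every choice of sets S_0,…,S_k with S_i ⊆ F_{i+1} \ F_i and S_i ∪ F_i a flat of M for each i, the inequality ∑_{l∈L} a(S_0 ∪ ⋯ ∪ S_k)_l x_l ≤ ∑_{i=0}^{k} (r(S_i ∪ F_i) − r(F_i)) holds. Then x is a fractional matching in (M, L), i.e., ∑_{l∈L} a(T)_l x_l ≤ r(T) for every flat T of M. -/

import Mathlib

open Set

variable {α : Type*}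

/-- The rank of a set in a matroid: the supremum of the cardinalities of its
independent subsets. -/
noncomputable def Matroid.rk' (M : Matroid α) (X : Set α) : ℕ :=
  sSup {n : ℕ | ∃ I, M.Indep I ∧ I ⊆ X ∧ I.ncard = n}

/-- A matroid is loopless if the closure of the empty set is empty. -/
def Matroid.Loopless' (M : Matroid α) : Prop := M.closure ∅ = ∅

/-- A line of a matroid: a subset of the ground set of rank 1 or 2. -/
def Matroid.IsLine (M : Matroid α) (l : Set α) : Prop :=
  l ⊆ M.E ∧ (M.rk' l = 1 ∨ M.rk' l = 2)

open scoped Classical in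
/-- Degree `a(X)_l` of a set `X` at a line `l`. -/
noncomputable def deg (X l : Set α) : ℕ :=
  if X ∩ l = ∅ then 0 else if l ⊆ X then 2 else 1

/-- A fractional matching of the pair `(M, L)`. -/
def IsFracMatching (M : Matroid α) (L : Finset (Set α)) (x : Set α → ℝ) : Prop :=
  (∀ l ∈ L, 0 ≤ x l) ∧
  ∀ F : Set α, M.IsFlat F → ∑ l ∈ L, (deg F l : ℝ) * x l ≤ (M.rk' F : ℝ)

/-- `a(y)_l` for a finitely supported `y` on flats. -/
noncomputable def aDual (y : Set α →₀ ℝ) (l : Set α) : ℝ :=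
  y.sum fun F c => c * (deg F l : ℝ)

/-- `r(y)` for a finitely supported `y` on flats. -/
noncomputable def rDual (M : Matroid α) (y : Set α →₀ ℝ) : ℝ :=
  y.sum fun F c => c * (M.rk' F : ℝ)

/-!
For a flat `T`, the sets `S_i = cl((T ∩ F_{i+1}) ∪ F_i) \ F_i` are admissible in the hypothesis
and cover `T`, so `a(T) ≤ a(S_0 ∪ ⋯ ∪ S_k)` coordinatewise. By submodularity
`r(S_i ∪ F_i) - r(F_i) ≤ r(T ∩ F_{i+1}) - r(T ∩ F_i)`, and these bounds telescope to `r(T)`.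
-/

open scoped Classical in
lemma deg_mono {X Y l : Set α} (h : X ⊆ Y) : deg X l ≤ deg Y l := by
  unfold deg
  by_cases hX : X ∩ l = ∅
  · simp [hX]
  · have hY : Y ∩ l ≠ ∅ := fun hY =>
      hX (subset_empty_iff.1 (hY ▸ inter_subset_inter_left l h))
    by_cases hlX : l ⊆ X
    · simp [hX, hY, hlX, hlX.trans h]
    · simp only [hX, hY, hlX, if_false]
      split_ifs <;> omega

namespace Matroid

variable {M : Matroid α} {X I : Set α}

lemma IsBasis'.rk'_eq_ncard [M.RankFinite] (hI : M.IsBasis' I X) : M.rk' X = I.ncard := by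
  refine IsGreatest.csSup_eq ⟨⟨I, hI.indep, hI.subset, rfl⟩, ?_⟩
  rintro n ⟨J, hJ, hJX, rfl⟩
  have hle : (J.ncard : ℕ∞) ≤ I.ncard := by
    rw [hJ.finite.cast_ncard_eq, hI.indep.finite.cast_ncard_eq, hI.encard_eq_eRk]
    exact hJ.encard_le_eRk_of_subset hJX
  exact_mod_cast hle

lemma natCast_rk' [M.RankFinite] (X : Set α) : (M.rk' X : ℕ∞) = M.eRk X := by
  obtain ⟨I, hI⟩ := M.exists_isBasis' X
  rw [hI.rk'_eq_ncard, hI.indep.finite.cast_ncard_eq, hI.encard_eq_eRk]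

lemma rk'_empty [M.RankFinite] : M.rk' ∅ = 0 := by
  have h := M.eRk_empty
  rw [← natCast_rk'] at h
  exact_mod_cast h

lemma rk'_closure_eq [M.RankFinite] (X : Set α) : M.rk' (M.closure X) = M.rk' X := by
  have h := M.eRk_closure_eq X
  rw [← natCast_rk', ← natCast_rk'] at h
  exact_mod_cast h

lemma rk'_union_add_rk'_inter_le [M.RankFinite] (X Y : Set α) :
    M.rk' (X ∪ Y) + M.rk' (X ∩ Y) ≤ M.rk' X + M.rk' Y := by
  have h := M.eRk_inter_add_eRk_union_le X Y
  simp only [← natCast_rk'] at h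
  exact_mod_cast add_comm (M.rk' (X ∩ Y) : ℕ∞) _ ▸ h

variable {F : ℕ → Set α} {T : Set α} {i : ℕ}

def chainSlice (M : Matroid α) (F : ℕ → Set α) (T : Set α) (i : ℕ) : Set α :=
  M.closure (T ∩ F (i+1) ∪ F i) \ F i

lemma chainSlice_union_eq (hFi : M.IsFlat (F i)) :
    M.chainSlice F T i ∪ F i = M.closure (T ∩ F (i+1) ∪ F i) :=
  sdiff_union_of_subset <|
    hFi.closure.symm.subset.trans (M.closure_subset_closure subset_union_right)

lemma isFlat_chainSlice_union (hFi : M.IsFlat (F i)) : M.IsFlat (M.chainSlice F T i ∪ F i) := by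
  rw [chainSlice_union_eq hFi]
  exact M.isFlat_closure _

lemma chainSlice_subset (hF : M.IsFlat (F (i+1))) (hFi : F i ⊆ F (i+1)) :
    M.chainSlice F T i ⊆ F (i+1) \ F i :=
  sdiff_subset_sdiff_left <|
    (M.closure_subset_closure (union_subset inter_subset_right hFi)).trans hF.closure.subset

lemma subset_chainSlice (hT : T ⊆ M.E) : (T ∩ F (i+1)) \ F i ⊆ M.chainSlice F T i :=
  sdiff_subset_sdiff_left <| (M.subset_closure _ (inter_subset_left.trans hT)).trans
    (M.closure_subset_closure subset_union_left)

lemma inter_subset_union_biUnion_chainSlice (hT : T ⊆ M.E) (n : ℕ) :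
    T ∩ F n ⊆ F 0 ∪ ⋃ i ∈ Finset.range n, M.chainSlice F T i := by
  induction n with
  | zero => exact inter_subset_right.trans subset_union_left
  | succ n ih =>
    rw [Finset.range_add_one, Finset.set_biUnion_insert]
    intro t ht
    by_cases htn : t ∈ F n
    · exact union_subset_union_right _ subset_union_right (ih ⟨ht.1, htn⟩)
    · exact Or.inr (Or.inl (subset_chainSlice hT ⟨ht, htn⟩))

lemma rk'_chainSlice_union_add_le [M.RankFinite] (hFi : M.IsFlat (F i))
    (hsub : F i ⊆ F (i+1)) :
    M.rk' (M.chainSlice F T i ∪ F i) + M.rk' (T ∩ F i)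
      ≤ M.rk' (T ∩ F (i+1)) + M.rk' (F i) := by
  have h := M.rk'_union_add_rk'_inter_le (T ∩ F (i+1)) (F i)
  rwa [inter_assoc, inter_eq_self_of_subset_right hsub,
    ← M.rk'_closure_eq (T ∩ F (i+1) ∪ F i), ← chainSlice_union_eq hFi] at h

lemma sum_rk'_chainSlice_le [M.RankFinite] (n : ℕ)
    (hF : ∀ i < n, M.IsFlat (F i) ∧ F i ⊆ F (i+1)) :
    ∑ i ∈ Finset.range n, ((M.rk' (M.chainSlice F T i ∪ F i) : ℝ) - M.rk' (F i))
      ≤ M.rk' (T ∩ F n) - M.rk' (T ∩ F 0) := by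
  rw [← Finset.sum_range_sub (fun i => (M.rk' (T ∩ F i) : ℝ))]
  refine Finset.sum_le_sum fun i hi => ?_
  obtain ⟨hFi, hsub⟩ := hF i (Finset.mem_range.1 hi)
  have h : (M.rk' (M.chainSlice F T i ∪ F i) : ℝ) + M.rk' (T ∩ F i)
      ≤ M.rk' (T ∩ F (i+1)) + M.rk' (F i) := by
    exact_mod_cast rk'_chainSlice_union_add_le hFi hsub
  linarith

end Matroid

theorem stmt_8_general (M : Matroid α) [M.RankFinite]
    (L : Finset (Set α))
    (k : ℕ) (F : ℕ → Set α) (hF0 : F 0 = ∅) (hFE : F (k+1) = M.E)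
    (hFflat : ∀ i ≤ k+1, M.IsFlat (F i)) (hFmono : ∀ i ≤ k, F i ⊂ F (i+1))
    (x : Set α → ℝ) (hx0 : ∀ l ∈ L, 0 ≤ x l)
    (hstar : ∀ S : ℕ → Set α,
      (∀ i ≤ k, S i ⊆ F (i+1) \ F i ∧ M.IsFlat (S i ∪ F i)) →
      ∑ l ∈ L, (deg (⋃ i ∈ Finset.range (k+1), S i) l : ℝ) * x l
        ≤ ∑ i ∈ Finset.range (k+1), ((M.rk' (S i ∪ F i) : ℝ) - (M.rk' (F i) : ℝ))) :
    IsFracMatching M L x := by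
  refine ⟨hx0, fun T hT => ?_⟩
  have hcover : T ⊆ ⋃ i ∈ Finset.range (k+1), M.chainSlice F T i := by
    have h := Matroid.inter_subset_union_biUnion_chainSlice (F := F) hT.subset_ground (k+1)
    rwa [hFE, inter_eq_self_of_subset_left hT.subset_ground, hF0, empty_union] at h
  have hS (i) (hi : i ≤ k) :
      M.chainSlice F T i ⊆ F (i+1) \ F i ∧ M.IsFlat (M.chainSlice F T i ∪ F i) :=
    ⟨Matroid.chainSlice_subset (hFflat (i+1) (by omega)) (hFmono i hi).subset,
      Matroid.isFlat_chainSlice_union (hFflat i (by omega))⟩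
  calc ∑ l ∈ L, (deg T l : ℝ) * x l
      ≤ ∑ l ∈ L, (deg (⋃ i ∈ Finset.range (k+1), M.chainSlice F T i) l : ℝ) * x l :=
        Finset.sum_le_sum fun l hl =>
          mul_le_mul_of_nonneg_right (by exact_mod_cast deg_mono hcover) (hx0 l hl)
    _ ≤ ∑ i ∈ Finset.range (k+1),
          ((M.rk' (M.chainSlice F T i ∪ F i) : ℝ) - M.rk' (F i)) :=
        hstar _ hS
    _ ≤ M.rk' (T ∩ F (k+1)) - M.rk' (T ∩ F 0) :=
        Matroid.sum_rk'_chainSlice_le (k+1) fun i hi =>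
          ⟨hFflat i (by omega), (hFmono i (by omega)).subset⟩
    _ = M.rk' T := by
        rw [hFE, hF0, inter_eq_self_of_subset_left hT.subset_ground, inter_empty,
          Matroid.rk'_empty]
        simp

/-- a fractional matching of `(M⋆𝓕, L)` is a fractional matching of `(M, L)`. -/
theorem stmt_8 (M : Matroid α) [M.RankFinite] (hM : M.Loopless')
    (L : Finset (Set α)) (hL : ∀ l ∈ L, M.IsLine l)
    (k : ℕ) (F : ℕ → Set α) (hF0 : F 0 = ∅) (hFE : F (k+1) = M.E)
    (hFflat : ∀ i ≤ k+1, M.IsFlat (F i)) (hFmono : ∀ i ≤ k, F i ⊂ F (i+1))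
    (x : Set α → ℝ) (hx0 : ∀ l ∈ L, 0 ≤ x l)
    (hstar : ∀ S : ℕ → Set α,
      (∀ i ≤ k, S i ⊆ F (i+1) \ F i ∧ M.IsFlat (S i ∪ F i)) →
      ∑ l ∈ L, (deg (⋃ i ∈ Finset.range (k+1), S i) l : ℝ) * x l
        ≤ ∑ i ∈ Finset.range (k+1), ((M.rk' (S i ∪ F i) : ℝ) - (M.rk' (F i) : ℝ))) :
    IsFracMatching M L x :=
  stmt_8_general M L k F hF0 hFE hFflat hFmono x hx0 hstar
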